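/- arXiv:1204.6512 — 2 statements merged into one kernel-verified Lean document; each statement's English description precedes it below -/
import Mathlib

section
/- For every h > 0, the first and second continuous moments of Monaghan's modified B-spline vanish: ∫_ℝ x · W₄(x, h) dx = 0 and ∫_ℝ x² · W₄(x, h) dx = 0. -/
/-!
`W₄(·, h)` is even, so `x W₄(x, h)` is odd and integrates to zero. The substitution `x = h y`
gives `∫ x² W₄(x, h) dx = h³ ∫ y² W₄(y, 1) dy`, and by evenness the latter is twice the integral
over `[0, 2]`, where the two cubic pieces contribute `1/12` and `-1/12`.
-/

open MeasureTheory Set Function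

/-- Monaghan's modified cubic B-spline interpolation kernel `W₄`. -/
noncomputable def W4 (x h : ℝ) : ℝ :=
  let s := |x| / h
  if s ≤ 1 then 1 - 5/2 * s^2 + 3/2 * s^3
  else if s ≤ 2 then 1/2 * (2 - s)^2 * (1 - s)
  else 0

theorem integral_eq_zero_of_odd {G E : Type*} [MeasurableSpace G] [AddGroup G] [MeasurableNeg G]
    [NormedAddCommGroup E] [NormedSpace ℝ E] (μ : Measure G) [μ.IsNegInvariant] {f : G → E}
    (hf : ∀ x, f (-x) = -f x) : ∫ x, f x ∂μ = 0 := by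
  have h := integral_neg_eq_self f μ
  simp only [hf, integral_neg] at h
  have h2 : (2 : ℝ) • ∫ x, f x ∂μ = 0 := by
    rw [two_smul]; nth_rw 1 [← h]; exact neg_add_cancel _
  exact (smul_eq_zero.mp h2).resolve_left two_ne_zero

theorem integral_eq_two_smul_intervalIntegral_of_even {E : Type*} [NormedAddCommGroup E]
    [NormedSpace ℝ E] {f : ℝ → E} {a : ℝ} (hf : ∀ x, f (-x) = f x)
    (hsupp : support f ⊆ Ioc (-a) a) (hfi : IntervalIntegrable f volume 0 a) :
    ∫ x, f x = 2 • ∫ x in 0..a, f x := by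
  have hfi' : IntervalIntegrable f volume (-a) 0 := by
    simpa [hf] using ((IntervalIntegrable.iff_comp_neg).mp hfi).symm
  have hleft : ∫ x in (-a)..0, f x = ∫ x in 0..a, f x := by
    simpa [hf] using (intervalIntegral.integral_comp_neg (a := 0) (b := a) f).symm
  rw [← intervalIntegral.integral_eq_integral_of_support_subset hsupp,
    ← intervalIntegral.integral_add_adjacent_intervals hfi' hfi, hleft, two_smul]

lemma W4_neg (x h : ℝ) : W4 (-x) h = W4 x h := by
  simp only [W4, abs_neg]

lemma W4_eq_W4_div {h : ℝ} (hh : 0 < h) (x : ℝ) : W4 x h = W4 (x / h) 1 := by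
  simp only [W4, abs_div, abs_of_pos hh, div_one]

lemma continuous_W4 (h : ℝ) : Continuous (W4 · h) := by
  refine Continuous.if_le (by fun_prop) (Continuous.if_le ?_ continuous_const ?_ continuous_const ?_)
    (by fun_prop) continuous_const ?_
  -- the branches agree where they meet: both vanish at `s = 1`, the middle one at `s = 2`
  all_goals first | fun_prop | intro x hx; rw [hx]; norm_num

lemma W4_one_of_mem_Icc_zero_one {y : ℝ} (hy : y ∈ Icc 0 1) :
    W4 y 1 = 1 - 5/2 * y^2 + 3/2 * y^3 := by
  simp [W4, abs_of_nonneg hy.1, hy.2]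

lemma W4_one_of_mem_Icc_one_two {y : ℝ} (hy : y ∈ Icc 1 2) :
    W4 y 1 = 1/2 * (2 - y)^2 * (1 - y) := by
  rcases hy.1.eq_or_lt with rfl | h1
  · norm_num [W4]
  · simp [W4, abs_of_pos (zero_lt_one.trans h1), h1.not_ge, hy.2]

lemma W4_one_eq_zero_of_two_le_abs {y : ℝ} (hy : 2 ≤ |y|) : W4 y 1 = 0 := by
  rcases hy.eq_or_lt with h2 | h2
  · norm_num [W4, ← h2]
  · simp [W4, (one_lt_two.trans h2).not_ge, h2.not_ge]

lemma support_W4_one_subset : support (W4 · 1) ⊆ Ioo (-2) 2 := by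
  intro y hy
  by_contra hy'
  rw [mem_Ioo, ← abs_lt, not_lt] at hy'
  exact hy (W4_one_eq_zero_of_two_le_abs hy')

lemma integral_pow_mul_W4 (n : ℕ) {h : ℝ} (hh : 0 < h) :
    ∫ x, x ^ n * W4 x h = h ^ (n + 1) * ∫ y, y ^ n * W4 y 1 := by
  have hscale : ∀ x, x ^ n * W4 x h = h ^ n * ((x / h) ^ n * W4 (x / h) 1) := by
    intro x
    rw [← W4_eq_W4_div hh, div_pow]
    field_simp
  simp_rw [hscale, integral_const_mul]
  rw [Measure.integral_comp_div (fun y => y ^ n * W4 y 1) h, abs_of_pos hh, smul_eq_mul]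
  ring

lemma intervalIntegral_sq_mul_W4_one_zero_one : ∫ y in (0 : ℝ)..1, y ^ 2 * W4 y 1 = 1 / 12 :=
  calc _ = ∫ y in (0 : ℝ)..1, y ^ 2 - 5/2 * y ^ 4 + 3/2 * y ^ 5 := by
        refine intervalIntegral.integral_congr fun y hy => ?_
        rw [uIcc_of_le zero_le_one] at hy
        simp only [W4_one_of_mem_Icc_zero_one hy]
        ring
    _ = 1 / 12 := by
        simp (disch := (apply Continuous.intervalIntegrable; fun_prop))
          [intervalIntegral.integral_add, intervalIntegral.integral_sub,
            intervalIntegral.integral_const_mul]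
        norm_num

lemma intervalIntegral_sq_mul_W4_one_one_two : ∫ y in (1 : ℝ)..2, y ^ 2 * W4 y 1 = -1 / 12 :=
  calc _ = ∫ y in (1 : ℝ)..2, 2 * y ^ 2 - 4 * y ^ 3 + 5/2 * y ^ 4 - 1/2 * y ^ 5 := by
        refine intervalIntegral.integral_congr fun y hy => ?_
        rw [uIcc_of_le one_le_two] at hy
        simp only [W4_one_of_mem_Icc_one_two hy]
        ring
    _ = -1 / 12 := by
        simp (disch := (apply Continuous.intervalIntegrable; fun_prop))
          [intervalIntegral.integral_add, intervalIntegral.integral_sub,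
            intervalIntegral.integral_const_mul]
        norm_num

lemma integral_sq_mul_W4_one : ∫ y, y ^ 2 * W4 y 1 = 0 := by
  have hint (a b : ℝ) : IntervalIntegrable (fun y : ℝ => y ^ 2 * W4 y 1) volume a b :=
    ((continuous_pow 2).mul (continuous_W4 1)).intervalIntegrable a b
  have hsupp : support (fun y : ℝ => y ^ 2 * W4 y 1) ⊆ Ioc (-2) 2 :=
    (support_mul_subset_right _ _).trans (support_W4_one_subset.trans Ioo_subset_Ioc_self)
  rw [integral_eq_two_smul_intervalIntegral_of_even (fun y => by rw [W4_neg, neg_sq]) hsupp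
      (hint 0 2), ← intervalIntegral.integral_add_adjacent_intervals (hint 0 1) (hint 1 2),
    intervalIntegral_sq_mul_W4_one_zero_one, intervalIntegral_sq_mul_W4_one_one_two]
  norm_num

/-- The first and second continuous moments of Monaghan's modified B-spline vanish. -/
theorem W4_moments_vanish (h : ℝ) (hh : 0 < h) :
    (∫ x : ℝ, x * W4 x h) = 0 ∧ (∫ x : ℝ, x ^ 2 * W4 x h) = 0 :=
  ⟨integral_eq_zero_of_odd volume fun x => by rw [W4_neg, neg_mul],
    by rw [integral_pow_mul_W4 2 hh, integral_sq_mul_W4_one, mul_zero]⟩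
end

section
/- There exists a constant C > 0, independent of h, f, and x, such that for every h > 0, every three times continuously differentiable function f : ℝ → ℝ whose third derivative is bounded by M, and every x ∈ ℝ, the grid interpolant built from Monaghan's modified B-spline is third-order accurate: |∑_{j ∈ ℤ} f(jh) · W₄(x − jh, h) − f(x)| ≤ C · M · h³. -/
open Finset Nat

lemma W4_mul_right (s : ℝ) {h : ℝ} (hh : 0 < h) : W4 (s * h) h = W4 s 1 := by
  simp only [W4, abs_mul, abs_of_pos hh, div_one, mul_div_cancel_right₀ _ hh.ne']

lemma W4_one_of_abs_le_one {s : ℝ} (hs : |s| ≤ 1) :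
    W4 s 1 = 1 - 5/2 * |s| ^ 2 + 3/2 * |s| ^ 3 := by
  simp only [W4, div_one, if_pos hs]

lemma W4_one_of_one_le_abs {s : ℝ} (h1 : 1 ≤ |s|) (h2 : |s| ≤ 2) :
    W4 s 1 = 1/2 * (2 - |s|) ^ 2 * (1 - |s|) := by
  simp only [W4, div_one]
  split_ifs with h
  · rw [le_antisymm h h1]; norm_num
  · rfl

lemma W4_one_eq_zero {s : ℝ} (hs : 2 ≤ |s|) : W4 s 1 = 0 := by
  simp only [W4, div_one]
  split_ifs with h1 h2
  · linarith
  · rw [le_antisymm h2 hs]; norm_num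
  · rfl

lemma abs_W4_le_one {h : ℝ} (hh : 0 ≤ h) (x : ℝ) : |W4 x h| ≤ 1 := by
  have hs : 0 ≤ |x| / h := by positivity
  simp only [W4]
  split_ifs with h1 h2 <;> rw [abs_le] <;> constructor <;> nlinarith [mul_nonneg hs hs]

def ReproducesPolynomials {ι : Type*} (s : Finset ι) (y w : ι → ℝ) (x : ℝ) (n : ℕ) : Prop :=
  ∀ c : ℕ → ℝ, ∑ k ∈ s, (∑ i ∈ range (n + 1), c i * (y k - x) ^ i) * w k = c 0

lemma abs_sub_sum_iteratedDeriv_le {f : ℝ → ℝ} {n : ℕ} (hf : ContDiff ℝ (n + 1) f) {M : ℝ}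
    (hM : ∀ y, |iteratedDeriv (n + 1) f y| ≤ M) (x y : ℝ) :
    |f y - ∑ i ∈ range (n + 1), iteratedDeriv i f x / i ! * (y - x) ^ i| ≤
      M * |y - x| ^ (n + 1) / (n + 1)! := by
  rcases eq_or_ne x y with rfl | hxy
  · simp [sum_range_succ']
  obtain ⟨z, -, hz⟩ := taylor_mean_remainder_lagrange_iteratedDeriv hxy hf.contDiffOn
  have htaylor : taylorWithinEval f n (Set.uIcc x y) x y =
      ∑ i ∈ range (n + 1), iteratedDeriv i f x / i ! * (y - x) ^ i := by
    rw [taylor_within_apply]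
    refine sum_congr rfl fun i hi => ?_
    rw [iteratedDerivWithin_eq_iteratedDeriv (uniqueDiffOn_uIcc hxy) _ Set.left_mem_uIcc]
    · simp only [smul_eq_mul]; ring
    · exact (hf.of_le (by exact_mod_cast (mem_range.mp hi).le)).contDiffAt
  rw [← htaylor, hz, abs_div, abs_mul, abs_pow, Nat.abs_cast]
  gcongr
  exact hM z

lemma abs_sum_mul_sub_le_of_reproducesPolynomials {ι : Type*} {s : Finset ι} {y w : ι → ℝ}
    {x : ℝ} {n : ℕ} (hw : ReproducesPolynomials s y w x n) {f : ℝ → ℝ}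
    (hf : ContDiff ℝ (n + 1) f) {M : ℝ} (hM : ∀ y, |iteratedDeriv (n + 1) f y| ≤ M) :
    |∑ k ∈ s, f (y k) * w k - f x| ≤ ∑ k ∈ s, M * |y k - x| ^ (n + 1) / (n + 1)! * |w k| := by
  set T : ℝ → ℝ := fun z => ∑ i ∈ range (n + 1), iteratedDeriv i f x / i ! * (z - x) ^ i
  have hT : ∑ k ∈ s, T (y k) * w k = f x := by simpa using hw fun i => iteratedDeriv i f x / (i !)
  calc |∑ k ∈ s, f (y k) * w k - f x|
      = |∑ k ∈ s, (f (y k) - T (y k)) * w k| := by simp only [sub_mul, sum_sub_distrib, hT]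
    _ ≤ ∑ k ∈ s, |(f (y k) - T (y k)) * w k| := abs_sum_le_sum_abs _ _
    _ ≤ _ := sum_le_sum fun k _ => by
        rw [abs_mul]; gcongr; exact abs_sub_sum_iteratedDeriv_le hf hM x (y k)

lemma W4_reproducesPolynomials {t : ℝ} (ht0 : 0 ≤ t) (ht1 : t < 1) (n : ℤ) (h : ℝ) :
    ReproducesPolynomials {-1, 0, 1, 2} (fun k : ℤ => (n + k) * h) (fun k => W4 (t - k) 1)
      ((n + t) * h) 2 := by
  have w₁ : W4 (t + 1) 1 = -(t * (1 - t) ^ 2) / 2 := by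
    rw [W4_one_of_one_le_abs] <;> rw [abs_of_nonneg (by linarith)] <;> [ring; linarith; linarith]
  have w₂ : W4 t 1 = 1 - 5/2 * t ^ 2 + 3/2 * t ^ 3 := by
    rw [W4_one_of_abs_le_one] <;> rw [abs_of_nonneg ht0]; linarith
  have w₃ : W4 (t - 1) 1 = 1 - 5/2 * (1 - t) ^ 2 + 3/2 * (1 - t) ^ 3 := by
    rw [W4_one_of_abs_le_one] <;> rw [abs_of_nonpos (by linarith)] <;> [ring; linarith]
  have w₄ : W4 (t - 2) 1 = 1/2 * t ^ 2 * (t - 1) := by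
    rw [W4_one_of_one_le_abs] <;> rw [abs_of_nonpos (by linarith)] <;> [ring; linarith; linarith]
  intro c
  rw [sum_insert (by decide), sum_insert (by decide), sum_insert (by decide), sum_singleton]
  simp only [sum_range_succ, range_one, sum_singleton, Int.cast_neg, Int.cast_one, Int.cast_zero,
    Int.cast_ofNat, sub_neg_eq_add, sub_zero, w₁, w₂, w₃, w₄]
  ring

lemma tsum_W4_grid_eq_sum (f : ℝ → ℝ) {h : ℝ} (hh : 0 < h) (n : ℤ) {t : ℝ} (ht0 : 0 ≤ t)
    (ht1 : t ≤ 1) :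
    ∑' j : ℤ, f (j * h) * W4 ((n + t) * h - j * h) h =
      ∑ k ∈ ({-1, 0, 1, 2} : Finset ℤ), f ((n + k) * h) * W4 (t - k) 1 := by
  rw [← (Equiv.addLeft n).tsum_eq]
  simp only [Equiv.coe_addLeft, Int.cast_add]
  have harg : ∀ k : ℤ, (n + t) * h - (n + k) * h = (t - k) * h := fun k => by ring
  simp only [harg, W4_mul_right _ hh]
  refine tsum_eq_sum (s := {-1, 0, 1, 2}) fun k hk => ?_
  have hk' : k ≤ -2 ∨ 3 ≤ k := by simp only [mem_insert, mem_singleton] at hk; omega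
  rw [W4_one_eq_zero, mul_zero]
  rcases hk' with hk' | hk'
  · have : (k : ℝ) ≤ -2 := by exact_mod_cast hk'
    rw [abs_of_nonneg (by linarith)]; linarith
  · have : (3 : ℝ) ≤ k := by exact_mod_cast hk'
    rw [abs_of_nonpos (by linarith)]; linarith

/-- The grid interpolant built from Monaghan's modified B-spline is third-order
accurate for `C³` functions with bounded third derivative. -/
theorem W4_third_order_accurate :
    ∃ C : ℝ, 0 < C ∧ ∀ (h : ℝ), 0 < h → ∀ (f : ℝ → ℝ) (M : ℝ),
      ContDiff ℝ 3 f → (∀ y : ℝ, |iteratedDeriv 3 f y| ≤ M) →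
      ∀ x : ℝ, |(∑' j : ℤ, f (j * h) * W4 (x - j * h) h) - f x| ≤ C * M * h ^ 3 := by
  refine ⟨16 / 3, by norm_num, fun h hh f M hf hM x => ?_⟩
  obtain ⟨n, t, ht0, ht1, rfl⟩ : ∃ (n : ℤ) (t : ℝ), 0 ≤ t ∧ t < 1 ∧ x = (n + t) * h :=
    ⟨⌊x / h⌋, Int.fract (x / h), Int.fract_nonneg _, Int.fract_lt_one _,
      by rw [Int.floor_add_fract, div_mul_cancel₀ _ hh.ne']⟩
  have hM0 : 0 ≤ M := (abs_nonneg _).trans (hM 0)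
  have hnode : ∀ k ∈ ({-1, 0, 1, 2} : Finset ℤ), |(n + k) * h - (n + t) * h| ≤ 2 * h := by
    intro k hk
    rw [show (n + k) * h - (n + t) * h = (k - t) * h by ring, abs_mul, abs_of_pos hh]
    gcongr
    simp only [mem_insert, mem_singleton] at hk
    rw [abs_le]
    rcases hk with rfl | rfl | rfl | rfl <;> push_cast <;> constructor <;> linarith
  rw [tsum_W4_grid_eq_sum f hh n ht0 ht1.le]
  refine (abs_sum_mul_sub_le_of_reproducesPolynomials (W4_reproducesPolynomials ht0 ht1 n h)
    hf hM).trans ?_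
  calc _ ≤ ∑ k ∈ ({-1, 0, 1, 2} : Finset ℤ), M * (2 * h) ^ 3 / 3 ! * 1 :=
        sum_le_sum fun k hk => by gcongr; exacts [hnode k hk, abs_W4_le_one zero_le_one _]
    _ = 16 / 3 * M * h ^ 3 := by
        rw [sum_const, show ({-1, 0, 1, 2} : Finset ℤ).card = 4 by rfl, nsmul_eq_mul,
          show (3 ! : ℝ) = 6 by norm_num [factorial]]
        ring
end
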